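/- arXiv:1608.08576 — 2 statements merged into one kernel-verified Lean document; each statement's English description precedes it below -/
import Mathlib

section
/- (Nemirovski lemma, 'if' direction) Given matrices A = A^H, B, C of conformable dimensions and κ ≥ 0, if there exists β ≥ 0 such that [[A − β C^H C, −κ B^H],[−κ B, β I]] ⪰ 0, then A ⪰ B^H X C + C^H X^H B for all X with operator norm ‖X‖ ≤ κ. -/
/-!
Write `X = κ Y` with `‖Y‖ ≤ 1` and let `P` be the block column `[I; Y C]`. Expanding the
congruence `Pᴴ M P` of the block matrix `M` of the hypothesis gives
`A - (Bᴴ X C + Cᴴ Xᴴ B) = Pᴴ M P + β Cᴴ (I - Yᴴ Y) C`,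
and both summands are positive semidefinite: the first because `M` is, the second because
`β ≥ 0` and `Yᴴ Y ≤ ‖Y‖² I ≤ I` in the C⋆-algebra of square matrices.
-/

open scoped Matrix ComplexOrder Matrix.Norms.L2Operator MatrixOrder

theorem exists_eq_smul_norm_le_one {𝕜 E : Type*} [RCLike 𝕜] [NormedAddCommGroup E]
    [NormedSpace 𝕜 E] {x : E} {κ : ℝ} (hx : ‖x‖ ≤ κ) : ∃ y : E, x = (κ : 𝕜) • y ∧ ‖y‖ ≤ 1 := by
  rcases (norm_nonneg x |>.trans hx).eq_or_lt with rfl | hκ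
  · exact ⟨0, by simpa using hx, by simp⟩
  · refine ⟨(κ : 𝕜)⁻¹ • x, (smul_inv_smul₀ (by exact_mod_cast hκ.ne') x).symm, ?_⟩
    rw [norm_smul, norm_inv, RCLike.norm_ofReal, abs_of_pos hκ]
    exact inv_mul_le_one_of_le₀ hx hκ.le

namespace Matrix

variable {n p q : Type*} [Fintype n] [Fintype p] [Fintype q]

theorem posSemidef_one_sub_conjTranspose_mul_self [DecidableEq q] {Y : Matrix p q ℂ}
    (hY : ‖Y‖ ≤ 1) : (1 - Yᴴ * Y).PosSemidef := by
  have hle : Yᴴ * Y ≤ algebraMap ℝ (Matrix q q ℂ) (‖Y‖ * ‖Y‖) :=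
    l2_opNorm_conjTranspose_mul_self Y ▸
      IsSelfAdjoint.le_algebraMap_norm_self (isHermitian_conjTranspose_mul_self Y)
  have hnorm : algebraMap ℝ (Matrix q q ℂ) (‖Y‖ * ‖Y‖) ≤ 1 := by
    simpa using algebraMap_mono (Matrix q q ℂ) (mul_le_one₀ hY (norm_nonneg Y) hY)
  exact hle.trans hnorm

theorem conjTranspose_fromRows_mul_fromBlocks_mul_fromRows_add {R : Type*} [CommRing R]
    [StarRing R] [DecidableEq n] [DecidableEq p] [DecidableEq q]
    (A : Matrix n n R) (B : Matrix p n R) (C : Matrix q n R) {X Y : Matrix p q R}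
    {κ : R} (hκ : star κ = κ) (hXY : X = κ • Y) (β : R) :
    (fromRows (1 : Matrix n n R) (Y * C))ᴴ
        * fromBlocks (A - β • (Cᴴ * C)) (-κ • Bᴴ) (-κ • B) (β • (1 : Matrix p p R))
        * fromRows (1 : Matrix n n R) (Y * C) + β • (Cᴴ * (1 - Yᴴ * Y) * C)
      = A - (Bᴴ * X * C + Cᴴ * Xᴴ * B) := by
  subst hXY
  rw [conjTranspose_fromRows_eq_fromCols_conjTranspose, fromCols_mul_fromBlocks,
    fromCols_mul_fromRows]
  simp only [conjTranspose_one, conjTranspose_mul, conjTranspose_smul, hκ, Matrix.one_mul,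
    Matrix.mul_one, Matrix.mul_sub, Matrix.sub_mul, Matrix.mul_smul, Matrix.smul_mul,
    Matrix.add_mul, Matrix.mul_assoc]
  module

end Matrix

theorem nemirovski_if_general {n p q : Type*} [Fintype n] [Fintype p] [Fintype q]
    [DecidableEq p] [DecidableEq q]
    (A : Matrix n n ℂ) (B : Matrix p n ℂ) (C : Matrix q n ℂ)
    (κ : ℝ) (β : ℝ) (hβ : 0 ≤ β)
    (h : (Matrix.fromBlocks (A - (β : ℂ) • (Cᴴ * C)) (-(κ : ℂ) • Bᴴ)
        (-(κ : ℂ) • B) ((β : ℂ) • (1 : Matrix p p ℂ))).PosSemidef) :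
    ∀ X : Matrix p q ℂ, ‖X‖ ≤ κ →
      (A - (Bᴴ * X * C + Cᴴ * Xᴴ * B)).PosSemidef := by
  classical
  intro X hX
  obtain ⟨Y, hXY, hY⟩ := exists_eq_smul_norm_le_one (𝕜 := ℂ) hX
  rw [← Matrix.conjTranspose_fromRows_mul_fromBlocks_mul_fromRows_add A B C
    (Complex.conj_ofReal κ) hXY β]
  exact (h.conjTranspose_mul_mul_same _).add
    (((Matrix.posSemidef_one_sub_conjTranspose_mul_self hY).conjTranspose_mul_mul_same C).smul
      (Complex.zero_le_real.mpr hβ))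

/-- Nemirovski lemma ('if' direction): if there exists `β ≥ 0` with
`[[A − β CᴴC, −κ Bᴴ],[−κ B, β I]] ⪰ 0`, then `A ⪰ Bᴴ X C + Cᴴ Xᴴ B` for all `X`
with operator norm `‖X‖ ≤ κ`. -/
theorem nemirovski_if {n p q : Type*} [Fintype n] [Fintype p] [Fintype q]
    [DecidableEq p] [DecidableEq q]
    (A : Matrix n n ℂ) (hA : A.IsHermitian) (B : Matrix p n ℂ) (C : Matrix q n ℂ)
    (κ : ℝ) (hκ : 0 ≤ κ) (β : ℝ) (hβ : 0 ≤ β)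
    (h : (Matrix.fromBlocks (A - (β : ℂ) • (Cᴴ * C)) (-(κ : ℂ) • Bᴴ)
        (-(κ : ℂ) • B) ((β : ℂ) • (1 : Matrix p p ℂ))).PosSemidef) :
    ∀ X : Matrix p q ℂ, ‖X‖ ≤ κ →
      (A - (Bᴴ * X * C + Cᴴ * Xᴴ * B)).PosSemidef :=
  nemirovski_if_general A B C κ β hβ h
end

section
/- Let X be an n×n Hermitian positive definite matrix, h ∈ ℂ^n, t > 0, and Z = X − t h h^H. If Z is positive semidefinite and Z Q = 0 for a nonzero PSD matrix Q, then rank(Z) = n − 1 and rank(Q) = 1. -/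
open scoped ComplexOrder Matrix

/-!
`X` is invertible, so it has full rank, and it differs from `Z` by a matrix of rank at most
one; hence `rank Z ≥ n - 1`. Since `Z * Q = 0`, rank–nullity gives `rank Z + rank Q ≤ n`,
and `Q ≠ 0` forces `rank Q ≥ 1`.
-/

namespace Matrix

variable {m n K : Type*} [Fintype n] [Field K]

theorem rank_add_le (A B : Matrix m n K) : (A + B).rank ≤ A.rank + B.rank := by
  rw [rank, rank, rank, mulVecLin_add]
  exact (Submodule.finrank_mono (LinearMap.range_add_le _ _)).trans
    (Submodule.finrank_add_le_finrank_add_finrank _ _)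

theorem rank_le_rank_sub_add_rank (A B : Matrix m n K) : A.rank ≤ (A - B).rank + B.rank := by
  simpa using rank_add_le (A - B) B

theorem one_le_rank_of_ne_zero {A : Matrix m n K} (hA : A ≠ 0) : 1 ≤ A.rank := by
  classical
  rw [Nat.one_le_iff_ne_zero, rank, Ne, Submodule.finrank_eq_zero, LinearMap.range_eq_bot,
    ← toLin'_apply', LinearEquiv.map_eq_zero_iff]
  exact hA

end Matrix

theorem rank_of_rank_one_perturbation_general {n : Type*} [Fintype n] [DecidableEq n]
    (X : Matrix n n ℂ) (hX : X.PosDef) (h : n → ℂ) (t : ℝ)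
    (Z : Matrix n n ℂ) (hZdef : Z = X - (t : ℂ) • Matrix.vecMulVec h (star h))
    (Q : Matrix n n ℂ) (hQne : Q ≠ 0)
    (hZQ : Z * Q = 0) :
    Z.rank = Fintype.card n - 1 ∧ Q.rank = 1 := by
  have hXrank : X.rank = Fintype.card n := X.rank_of_isUnit hX.isUnit
  have hperturbation : ((t : ℂ) • Matrix.vecMulVec h (star h)).rank ≤ 1 := by
    rw [← Matrix.smul_vecMulVec]
    exact Matrix.rank_vecMulVec_le _ _
  have hXZ : X.rank ≤ Z.rank + 1 :=
    hZdef ▸ (X.rank_le_rank_sub_add_rank _).trans (Nat.add_le_add_left hperturbation _)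
  have hZQrank : Z.rank + Q.rank ≤ Fintype.card n :=
    Matrix.rank_add_rank_le_card_of_mul_eq_zero hZQ
  have hQpos : 1 ≤ Q.rank := Matrix.one_le_rank_of_ne_zero hQne
  omega

/-- If `X ≻ 0`, `t > 0`, `Z = X − t h hᴴ ⪰ 0` and `Z Q = 0` for a nonzero PSD `Q`,
then `rank Z = n − 1` and `rank Q = 1`. -/
theorem rank_of_rank_one_perturbation {n : Type*} [Fintype n] [DecidableEq n]
    (X : Matrix n n ℂ) (hX : X.PosDef) (h : n → ℂ) (t : ℝ) (ht : 0 < t)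
    (Z : Matrix n n ℂ) (hZdef : Z = X - (t : ℂ) • Matrix.vecMulVec h (star h))
    (hZ : Z.PosSemidef) (Q : Matrix n n ℂ) (hQ : Q.PosSemidef) (hQne : Q ≠ 0)
    (hZQ : Z * Q = 0) :
    Z.rank = Fintype.card n - 1 ∧ Q.rank = 1 :=
  rank_of_rank_one_perturbation_general X hX h t Z hZdef Q hQne hZQ
end
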